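/- Let $G$ be a comonad on $\mathcal{A}$, $L \dashv R$ an adjunction with $L : \mathcal{B} \to \mathcal{A}$, and $\varphi : LR \to G$ a morphism of comonads. Assume the equalizer of $(\alpha_X, Rx)$ exists in $\mathcal{B}$ for every $G$-coalgebra $(X,x)$, where $\alpha = R\varphi \circ \eta R$. Then the right adjoint $D_\varphi : \mathcal{A}^G \to \mathcal{B}$ of $K_\varphi$ is fully faithful if and only if $L$ preserves all equalizers of the form $D_\varphi X \to RX \rightrightarrows RGX$ and $\varphi$ is an isomorphism. -/

import Mathlib

/-!
Coalgebra maps `K_φ T ⟶ X` correspond, by adjoint transposition, to maps `T ⟶ R X` equalizing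
`α_X` and `R x`; hence any right adjoint `D` of `K_φ` sends `X` to this equalizer, the equalizing
map being the transpose of the counit at `X`. When `φ` is invertible, `L` carries the pair
`(α_X, R x)` to the Beck pair `(δ_X, G x)`, whose equalizer is `x`, and the comparison map from
`L (D X)` to this equalizer is the counit at `X`; so `L` preserves the equalizer exactly when the
counit is invertible at `X`. Conversely, `D ⋙ cofree` and `R` are both right adjoint to `L`, and
under the resulting isomorphism `φ_Z` becomes the counit at the cofree coalgebra on `Z`; so a
fully faithful `D` forces `φ` to be invertible.
-/

open CategoryTheory CategoryTheory.Limits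

namespace CategoryTheory

def Limits.Fork.IsLimit.swap {C : Type*} [Category C] {X Y : C} {f g : X ⟶ Y} {c : Fork f g}
    (h : IsLimit c) : IsLimit (Fork.ofι c.ι c.condition.symm : Fork g f) :=
  Fork.IsLimit.mk' _ fun s =>
    ⟨Fork.IsLimit.lift h s.ι s.condition.symm, Fork.IsLimit.lift_ι' h _ _,
      fun hm => Fork.IsLimit.hom_ext h (hm.trans (Fork.IsLimit.lift_ι' h _ _).symm)⟩

lemma Adjunction.full_and_faithful_iff_isIso_counit {C D : Type*} [Category C] [Category D]
    {F : C ⥤ D} {U : D ⥤ C} (adj : F ⊣ U) : U.Full ∧ U.Faithful ↔ IsIso adj.counit :=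
  ⟨fun ⟨_, _⟩ => inferInstance, fun _ =>
    ⟨adj.fullyFaithfulROfIsIsoCounit.full, adj.fullyFaithfulROfIsIsoCounit.faithful⟩⟩

namespace Comonad

variable {C : Type*} [Category C]

lemma Coalgebra.ext {G : Comonad C} {X Y : G.Coalgebra} (hA : X.A = Y.A) (ha : HEq X.a Y.a) :
    X = Y := by
  cases X; cases Y; cases hA; cases ha; rfl

lemma isIso_iff_isIso_app {G₁ G₂ : Comonad C} (h : G₁ ⟶ G₂) : IsIso h ↔ ∀ Z, IsIso (h.app Z) :=
  (isIso_iff_of_reflects_iso h (comonadToFunctor C)).symm.trans (NatTrans.isIso_iff_isIso_app _)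

def coalgebraFunctorOfComonadHom {G₁ G₂ : Comonad C} (h : G₁ ⟶ G₂) :
    G₁.Coalgebra ⥤ G₂.Coalgebra where
  obj X :=
    { A := X.A
      a := X.a ≫ h.app X.A
      counit := by rw [Category.assoc, h.app_ε, X.counit]
      coassoc := by
        simp only [Category.assoc, ComonadHom.app_δ, X.coassoc_assoc, Functor.map_comp]
        rw [← h.naturality_assoc] }
  map f :=
    { f := f.f
      h := by
        simp only [Category.assoc]
        rw [← h.naturality, f.h_assoc] }

variable {A B : Type*} [Category A] [Category B] {L : B ⥤ A} {R : A ⥤ B} {adj : L ⊣ R}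
  {G : Comonad A} (φ : adj.toComonad ⟶ G)

/-- The paper's `K_φ`. -/
def comparisonOfComonadHom : B ⥤ G.Coalgebra :=
  comparison adj ⋙ coalgebraFunctorOfComonadHom φ

/-- The paper's `α = Rφ ∘ ηR`. -/
def coaction (Z : A) : R.obj Z ⟶ R.obj (G.obj Z) :=
  adj.homEquiv _ _ (φ.app Z)

lemma eq_comparisonOfComonadHom {K : B ⥤ G.Coalgebra} (hK : K ⋙ G.forget = L)
    (hKa : ∀ Y : B, HEq (K.obj Y).a (L.map (adj.unit.app Y) ≫ φ.app (L.obj Y))) :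
    K = comparisonOfComonadHom φ :=
  Functor.ext (fun Y => Coalgebra.ext (Functor.congr_obj hK Y) (hKa Y)) fun _ _ f =>
    G.forget.map_injective (by
      simp only [Functor.map_comp, eqToHom_map]
      exact Functor.congr_hom hK f)

lemma map_homEquiv_comp_app {T : B} {Z : A} (f : L.obj T ⟶ Z) :
    L.map (adj.homEquiv T Z f) ≫ φ.app Z = ((comparisonOfComonadHom φ).obj T).a ≫ G.map f := by
  rw [Adjunction.homEquiv_unit, L.map_comp]
  exact (Category.assoc _ _ _).trans
    ((congrArg (L.map (adj.unit.app T) ≫ ·) (φ.naturality f)).trans (Category.assoc _ _ _).symm)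

lemma comp_coaction {T : B} {Z : A} (t : T ⟶ R.obj Z) :
    t ≫ coaction φ Z = adj.homEquiv _ _ (L.map t ≫ φ.app Z) :=
  (adj.homEquiv_naturality_left _ _).symm

lemma homEquiv_comp_coaction_eq_iff {T : B} (X : G.Coalgebra) (f : L.obj T ⟶ X.A) :
    adj.homEquiv _ _ f ≫ coaction φ X.A = adj.homEquiv _ _ f ≫ R.map X.a ↔
      ((comparisonOfComonadHom φ).obj T).a ≫ G.map f = f ≫ X.a := by
  rw [comp_coaction, map_homEquiv_comp_app, ← Adjunction.homEquiv_naturality_right]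
  exact (adj.homEquiv _ _).apply_eq_iff_eq

def coalgebraHomEquiv (T : B) (X : G.Coalgebra) :
    ((comparisonOfComonadHom φ).obj T ⟶ X) ≃
      {t : T ⟶ R.obj X.A // t ≫ coaction φ X.A = t ≫ R.map X.a} where
  toFun f := ⟨adj.homEquiv _ _ f.f, (homEquiv_comp_coaction_eq_iff φ X f.f).2 f.h⟩
  invFun t :=
    ⟨(adj.homEquiv _ _).symm t.1,
      (homEquiv_comp_coaction_eq_iff φ X _).1 (by simpa only [Equiv.apply_symm_apply] using t.2)⟩
  left_inv f := by ext; exact (adj.homEquiv _ _).symm_apply_apply f.f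
  right_inv t := by ext; simp

lemma map_coaction_comp_app (Z : A) :
    L.map (coaction φ Z) ≫ φ.app (G.obj Z) = φ.app Z ≫ G.δ.app Z :=
  (map_homEquiv_comp_app φ (φ.app Z)).trans ((Category.assoc _ _ _).trans (φ.app_δ Z).symm)

def cofreeHom (Z : A) : (comparisonOfComonadHom φ).obj (R.obj Z) ⟶ G.cofree.obj Z where
  f := φ.app Z
  h := (Category.assoc _ _ _).trans (φ.app_δ Z).symm

section

variable {φ} {D : G.Coalgebra ⥤ B} (adj2 : comparisonOfComonadHom φ ⊣ D)

def descentFork (X : G.Coalgebra) : Fork (coaction φ X.A) (R.map X.a) :=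
  Fork.ofι _ (coalgebraHomEquiv φ _ X (adj2.counit.app X)).2

lemma comp_descentFork_ι {T : B} (X : G.Coalgebra) (g : T ⟶ D.obj X) :
    g ≫ (descentFork adj2 X).ι = (coalgebraHomEquiv φ T X ((adj2.homEquiv T X).symm g)).1 := by
  simp only [descentFork, coalgebraHomEquiv, Equiv.coe_fn_mk,
    Adjunction.homEquiv_counit, Coalgebra.comp_f]
  exact (adj.homEquiv_naturality_left _ _).symm

def isLimitDescentFork (X : G.Coalgebra) : IsLimit (descentFork adj2 X) :=
  Fork.IsLimit.mk' _ fun s =>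
    let e := (adj2.homEquiv s.pt X).symm.trans (coalgebraHomEquiv φ s.pt X)
    ⟨e.symm ⟨s.ι, s.condition⟩,
      (comp_descentFork_ι adj2 X _).trans (congrArg Subtype.val (e.apply_symm_apply _)),
      fun hm => e.eq_symm_apply.2 (Subtype.ext ((comp_descentFork_ι adj2 X _).symm.trans hm))⟩

lemma map_descentFork_ι_comp_app (X : G.Coalgebra) :
    L.map (descentFork adj2 X).ι ≫ φ.app X.A = (adj2.counit.app X).f ≫ X.a :=
  (map_homEquiv_comp_app φ _).trans (adj2.counit.app X).h

lemma isIso_counit_f_iff_nonempty_isLimit_map [IsIso φ] (X : G.Coalgebra) :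
    IsIso (adj2.counit.app X).f ↔ Nonempty (IsLimit (L.mapCone (descentFork adj2 X))) := by
  have := (isIso_iff_isIso_app φ).1 ‹_›
  let c : Fork (G.δ.app X.A) (G.map X.a) :=
    Fork.ofι ((adj2.counit.app X).f ≫ X.a) (by rw [Category.assoc, Category.assoc, X.coassoc])
  let e₀ := asIso (φ.app X.A)
  let e₁ := asIso (φ.app (G.obj X.A))
  have hc : IsLimit (L.mapCone (descentFork adj2 X)) ≃ IsLimit c :=
    (isLimitMapConeForkEquiv L _).trans
      (Fork.isLimitEquivOfIsos _ c e₀ e₁ (Iso.refl _)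
        (map_coaction_comp_app φ X.A).symm (φ.naturality X.a).symm
        ((Category.id_comp _).trans (map_descentFork_ι_comp_app adj2 X).symm))
  have hBeck := Fork.IsLimit.swap (beckEqualizer X)
  have hlift : hBeck.lift c = (adj2.counit.app X).f :=
    Fork.IsLimit.hom_ext hBeck (Fork.IsLimit.lift_ι hBeck)
  rw [hc.nonempty_congr, hBeck.nonempty_isLimit_iff_isIso_lift, hlift]
  exact Iff.rfl

lemma isIso_counit_f_iff_preservesLimit [IsIso φ] (X : G.Coalgebra) :
    IsIso (adj2.counit.app X).f ↔ PreservesLimit (parallelPair (coaction φ X.A) (R.map X.a)) L :=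
  (isIso_counit_f_iff_nonempty_isLimit_map adj2 X).trans
    (preservesLimit_iff_isLimit_mapCone (isLimitDescentFork adj2 X)).symm

lemma isIso_app_of_isIso_counit [IsIso adj2.counit] (Z : A) : IsIso (φ.app Z) := by
  let u := (adj.rightAdjointUniq (adj2.comp G.adj)).hom.app Z
  have key : cofreeHom φ Z =
      (comparisonOfComonadHom φ).map u ≫ adj2.counit.app (G.cofree.obj Z) := by
    apply (G.adj.homEquiv _ _).symm.injective
    have h := adj.rightAdjointUniq_hom_app_counit (adj2.comp G.adj) Z
    rw [Adjunction.comp_counit_app, adj_counit] at h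
    rw [Adjunction.homEquiv_counit, Adjunction.homEquiv_counit, adj_counit, Functor.map_comp,
      Category.assoc]
    exact (φ.app_ε Z).trans h.symm
  have : IsIso (cofreeHom φ Z) := by rw [key]; infer_instance
  exact inferInstanceAs (IsIso (G.forget.map (cofreeHom φ Z)))

end

end Comonad
end CategoryTheory

theorem stmt10_general {A : Type*} {B : Type*} [Category A] [Category B]
    (G : Comonad A) (L : B ⥤ A) (R : A ⥤ B) (adj : L ⊣ R)
    (φ : adj.toComonad ⟶ G)
    (K : B ⥤ G.Coalgebra)
    (hK : K ⋙ G.forget = L)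
    (hKa : ∀ Y : B, HEq (K.obj Y).a (L.map (adj.unit.app Y) ≫ φ.app (L.obj Y)))
    (D : G.Coalgebra ⥤ B)
    (adj2 : K ⊣ D) :
    (D.Full ∧ D.Faithful) ↔
      ((∀ X : G.Coalgebra,
          Nonempty (PreservesLimit
            (parallelPair (adj.unit.app (R.obj X.A) ≫ R.map (φ.app X.A)) (R.map X.a)) L)) ∧
        IsIso φ) := by
  obtain rfl := Comonad.eq_comparisonOfComonadHom φ hK hKa
  rw [adj2.full_and_faithful_iff_isIso_counit]
  constructor
  · intro
    have : IsIso φ := (Comonad.isIso_iff_isIso_app φ).2 (Comonad.isIso_app_of_isIso_counit adj2)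
    refine ⟨fun X => ⟨(Comonad.isIso_counit_f_iff_preservesLimit adj2 X).1 ?_⟩, this⟩
    exact inferInstanceAs (IsIso (G.forget.map (adj2.counit.app X)))
  · rintro ⟨hL, _⟩
    have (X : G.Coalgebra) : IsIso (adj2.counit.app X) :=
      have := (Comonad.isIso_counit_f_iff_preservesLimit adj2 X).2 (hL X).some
      Comonad.coalgebra_iso_of_iso G _
    exact NatIso.isIso_of_isIso_app _

/-- Theorem "Descent": in the setting of the lifted functor `K_φ` and its right
adjoint `D_φ` (given on a `G`-coalgebra `(X, x)` by the equalizer of `(α_X, Rx)`, assumed to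
exist), the right adjoint `D_φ` is fully faithful if and only if `L` preserves all the
equalizers of the form `D_φ X ⟶ RX ⇉ RGX` and `φ` is an isomorphism of comonads. -/
theorem stmt10 {A : Type*} {B : Type*} [Category A] [Category B]
    (G : Comonad A) (L : B ⥤ A) (R : A ⥤ B) (adj : L ⊣ R)
    (φ : adj.toComonad ⟶ G)
    (K : B ⥤ G.Coalgebra)
    (hK : K ⋙ G.forget = L)
    (hKa : ∀ Y : B, HEq (K.obj Y).a (L.map (adj.unit.app Y) ≫ φ.app (L.obj Y)))
    (hKf : ∀ Y Z : B, ∀ f : Y ⟶ Z, HEq (K.map f).f (L.map f))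
    (heq : ∀ X : G.Coalgebra,
      HasEqualizer (adj.unit.app (R.obj X.A) ≫ R.map (φ.app X.A)) (R.map X.a))
    (D : G.Coalgebra ⥤ B)
    (hobj : ∀ X : G.Coalgebra,
      D.obj X = equalizer (adj.unit.app (R.obj X.A) ≫ R.map (φ.app X.A)) (R.map X.a))
    (adj2 : K ⊣ D) :
    (D.Full ∧ D.Faithful) ↔
      ((∀ X : G.Coalgebra,
          Nonempty (PreservesLimit
            (parallelPair (adj.unit.app (R.obj X.A) ≫ R.map (φ.app X.A)) (R.map X.a)) L)) ∧
        IsIso φ) :=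
  stmt10_general G L R adj φ K hK hKa D adj2
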